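/- arXiv:2311.14318 — 5 statements merged into one kernel-verified Lean document; each statement's English description precedes it below -/
import Mathlib

section
/- Let λ ∈ (0,1) satisfy the equation αλ(λ-1)² + ρ(λ-1)² - √(1-κ²)·ζ·λ(λ-1) - (1/2)κ²σ_Z²λ = 0, and define u(y) = ((λ-1)/λ)(1+y)^(λ/(λ-1)) for y ≥ 0. Then u is a classical solution of the ODE -α(u'(y))²/u''(y) + √(1-κ²)·ζ·(y+1)u'(y) + (1/2)σ_Z²κ²(y+1)²u''(y) = ρu(y) for all y > 0, and satisfies the Neumann boundary condition u'(0) = 1. -/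
/-!
Writing `q = 1 / (λ - 1)`, the exponents of `u`, `u'`, `u''` are `q + 1`, `q`, `q - 1` and
`(λ - 1) / λ = 1 / (q + 1)`, so `u = (1 + y) ^ (q + 1) / (q + 1)` is a power function. Each term of
the ODE is then `(1 + y) ^ (q + 1)` times a constant, and the ODE reduces to the characteristic
equation `-α / q + √(1 - κ²) ζ + ½ σ_Z² κ² q = ρ / (q + 1)`, which is the given cubic in `λ` after
clearing the denominators `λ (λ - 1)`.
-/

open Real

theorem hasDerivAt_one_add_rpow {x : ℝ} (hx : 0 < 1 + x) (p : ℝ) :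
    HasDerivAt (fun y => (1 + y) ^ p) (p * (1 + x) ^ (p - 1)) x := by
  simpa using ((hasDerivAt_id x).const_add 1).rpow_const (p := p) (Or.inl hx.ne')

theorem hasDerivAt_one_add_rpow_add_one_div {p x : ℝ} (hx : 0 < 1 + x) (hp : p + 1 ≠ 0) :
    HasDerivAt (fun y => (1 + y) ^ (p + 1) / (p + 1)) ((1 + x) ^ p) x := by
  simpa [mul_div_cancel_left₀ _ hp] using (hasDerivAt_one_add_rpow hx (p + 1)).div_const (p + 1)

theorem rpow_solves_hjb_of_char_eq {α b c ρ q t : ℝ} (ht : 0 < t) (hq : q ≠ 0)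
    (hq1 : q + 1 ≠ 0) (hchar : -α / q + b + c * q = ρ / (q + 1)) :
    -α * (t ^ q) ^ 2 / (q * t ^ (q - 1)) + b * t * t ^ q + c * t ^ 2 * (q * t ^ (q - 1))
      = ρ * (t ^ (q + 1) / (q + 1)) := by
  have htq : 0 < t ^ q := rpow_pos_of_pos ht q
  rw [rpow_add ht, rpow_sub ht, rpow_one]
  field_simp at hchar ⊢
  linear_combination hchar

theorem char_eq_of_cubic {α b c ρ lam q : ℝ} (h0 : lam ≠ 0) (h1 : lam - 1 ≠ 0)
    (hq : q = 1 / (lam - 1))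
    (hroot : α * lam * (lam - 1) ^ 2 + ρ * (lam - 1) ^ 2 - b * lam * (lam - 1) - c * lam = 0) :
    -α / q + b + c * q = ρ / (q + 1) := by
  have hsum : q + 1 = lam / (lam - 1) := by rw [hq]; field_simp; ring
  rw [hsum, hq]
  field_simp
  linear_combination -hroot

theorem explicit_solution_of_HJB_general
    (α ρ σZ κ ζ lam : ℝ) (hlam : lam ∈ Set.Ioo (0 : ℝ) 1)
    (hroot : α * lam * (lam - 1) ^ 2 + ρ * (lam - 1) ^ 2
      - Real.sqrt (1 - κ ^ 2) * ζ * lam * (lam - 1) - (1 / 2) * κ ^ 2 * σZ ^ 2 * lam = 0)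
    (u u' u'' : ℝ → ℝ)
    (hu : ∀ y : ℝ, u y = ((lam - 1) / lam) * (1 + y) ^ (lam / (lam - 1)))
    (hu' : ∀ y : ℝ, u' y = (1 + y) ^ (1 / (lam - 1)))
    (hu'' : ∀ y : ℝ, u'' y = (1 / (lam - 1)) * (1 + y) ^ ((2 - lam) / (lam - 1))) :
    (∀ y ≥ (0 : ℝ), HasDerivAt u (u' y) y) ∧
    (∀ y ≥ (0 : ℝ), HasDerivAt u' (u'' y) y) ∧
    (∀ y > (0 : ℝ),
      -α * (u' y) ^ 2 / u'' y + Real.sqrt (1 - κ ^ 2) * ζ * (y + 1) * u' y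
        + (1 / 2) * σZ ^ 2 * κ ^ 2 * (y + 1) ^ 2 * u'' y = ρ * u y) ∧
    u' 0 = 1 := by
  obtain ⟨hl0, hl1⟩ := hlam
  have h1 : lam - 1 ≠ 0 := by linarith
  obtain ⟨q, hq⟩ : ∃ q, q = 1 / (lam - 1) := ⟨_, rfl⟩
  have hq0 : q ≠ 0 := hq ▸ one_div_ne_zero h1
  have hq1 : q + 1 = lam / (lam - 1) := by rw [hq]; field_simp; ring
  have hq1' : q + 1 ≠ 0 := hq1 ▸ div_ne_zero hl0.ne' h1
  have hu_eq : u = fun y => (1 + y) ^ (q + 1) / (q + 1) := by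
    funext y
    rw [hu, hq1]
    field_simp
  have hu'_eq : u' = fun y => (1 + y) ^ q := by
    funext y
    rw [hu', hq]
  have hu''_eq : u'' = fun y => q * (1 + y) ^ (q - 1) := by
    funext y
    rw [hu'', hq, show (2 - lam) / (lam - 1) = 1 / (lam - 1) - 1 by field_simp; ring]
  refine ⟨fun y hy => ?_, fun y hy => ?_, fun y hy => ?_, by simp [hu'_eq]⟩
  · rw [hu_eq, hu'_eq]
    exact hasDerivAt_one_add_rpow_add_one_div (by linarith) hq1'
  · rw [hu'_eq, hu''_eq]
    exact hasDerivAt_one_add_rpow (by linarith) q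
  · have hchar := char_eq_of_cubic (b := √(1 - κ ^ 2) * ζ) (c := 1 / 2 * κ ^ 2 * σZ ^ 2)
      hl0.ne' h1 hq hroot
    rw [hu_eq, hu'_eq, hu''_eq, add_comm y 1]
    convert rpow_solves_hjb_of_char_eq (t := 1 + y) (by linarith) hq0 hq1' hchar using 2
    ring

/-- With λ ∈ (0,1) a root of the cubic, u(y) = ((λ-1)/λ)(1+y)^(λ/(λ-1))
is a classical solution of the reduced HJB equation
-α(u')²/u'' + √(1-κ²)ζ(y+1)u' + (1/2)σ_Z²κ²(y+1)²u'' = ρu on (0,∞),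
with Neumann boundary condition u'(0) = 1. -/
theorem explicit_solution_of_HJB
    (α ρ σZ κ ζ lam : ℝ) (hα : 0 < α) (hρ : 0 < ρ) (hσZ : 0 < σZ)
    (hκ : κ ∈ Set.Icc (-1 : ℝ) 1) (hlam : lam ∈ Set.Ioo (0 : ℝ) 1)
    (hroot : α * lam * (lam - 1) ^ 2 + ρ * (lam - 1) ^ 2
      - Real.sqrt (1 - κ ^ 2) * ζ * lam * (lam - 1) - (1 / 2) * κ ^ 2 * σZ ^ 2 * lam = 0)
    (u u' u'' : ℝ → ℝ)
    (hu : ∀ y : ℝ, u y = ((lam - 1) / lam) * (1 + y) ^ (lam / (lam - 1)))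
    (hu' : ∀ y : ℝ, u' y = (1 + y) ^ (1 / (lam - 1)))
    (hu'' : ∀ y : ℝ, u'' y = (1 / (lam - 1)) * (1 + y) ^ ((2 - lam) / (lam - 1))) :
    (∀ y ≥ (0 : ℝ), HasDerivAt u (u' y) y) ∧
    (∀ y ≥ (0 : ℝ), HasDerivAt u' (u'' y) y) ∧
    (∀ y > (0 : ℝ),
      -α * (u' y) ^ 2 / u'' y + Real.sqrt (1 - κ ^ 2) * ζ * (y + 1) * u' y
        + (1 / 2) * σZ ^ 2 * κ ^ 2 * (y + 1) ^ 2 * u'' y = ρ * u y) ∧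
    u' 0 = 1 :=
  explicit_solution_of_HJB_general α ρ σZ κ ζ lam hlam hroot u u' u'' hu hu' hu''
end

section
/- Let d ≥ 1, ρ > 0, and set γ = ρ/d. Let α = (1/2)μᵀ(σσᵀ)⁻¹μ, ζ = σ_Zηᵀσ⁻¹μ, κ ∈ [-1,1], σ_Z > 0, with σ ∈ ℝ^{d×d} invertible. Define v(y) = ln(1+y) + (1/ρ)(-(1/2)σ_Z²κ² + √(1-κ²)ζ + (γ/2)ln((2πγ)^d/|det(σσᵀ)|) + α) for y ≥ 0. Then v solves the exploratory HJB equation (1/2)σ_Z²κ²(y+1)²v''(y) + √(1-κ²)ζ(y+1)v'(y) + γ·ln(√(-(2πγ)^d/(|det(σσᵀ)|·(v''(y))^d))) - α(v'(y))²/v''(y) = ρv(y) for all y > 0, with Neumann boundary condition v'(0) = 1. -/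
open Real Matrix

/-! For the ansatz `v = log (1 + y) + B` the diffusion, drift and `α v'² / v''` terms of the
equation are constants, while with `-v'' = (1 + y)⁻²` the entropy term
`γ log √((2πγ)^d / (|det σσᵀ| (-v'')^d))` equals `γ d log (1 + y)` plus a constant. The choice
`γ = ρ / d` makes this `ρ log (1 + y)`, matching `ρ v`, and equating constants determines `B`. -/

theorem abs_det_mul_transpose_pos {n : Type*} [Fintype n] [DecidableEq n] {σ : Matrix n n ℝ}
    (hσ : IsUnit σ.det) : 0 < |(σ * σᵀ).det| := by
  rw [abs_pos, det_mul, det_transpose]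
  exact mul_ne_zero hσ.ne_zero hσ.ne_zero

theorem hasDerivAt_log_one_add {y : ℝ} (hy : 1 + y ≠ 0) :
    HasDerivAt (fun x => log (1 + x)) (1 / (1 + y)) y := by
  simpa using ((hasDerivAt_id y).const_add 1).log hy

theorem hasDerivAt_one_div_one_add {y : ℝ} (hy : 1 + y ≠ 0) :
    HasDerivAt (fun x => 1 / (1 + x)) (-(1 / (1 + y) ^ 2)) y := by
  simpa [neg_div] using ((hasDerivAt_id y).const_add 1).fun_inv hy

theorem log_sqrt_div_mul_pow {c D s : ℝ} (hc : 0 < c) (hD : 0 < D) (hs : 0 < s) (d : ℕ) :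
    log √(c / (D * s ^ d)) = (log (c / D) - d * log s) / 2 := by
  rw [log_sqrt (by positivity), div_mul_eq_div_div, log_div (by positivity) (by positivity), log_pow]

theorem log_ansatz_solves_hjb {d : ℕ} {ρ γ a b c D α t : ℝ} (hγd : γ * d = ρ) (hρ : ρ ≠ 0)
    (hc : 0 < c) (hD : 0 < D) (ht : 0 < t) :
    a * t ^ 2 * (-(1 / t ^ 2)) + b * t * (1 / t)
        + γ * log √(c / (D * (1 / t ^ 2) ^ d)) - α * (1 / t) ^ 2 / (-(1 / t ^ 2))
      = ρ * (log t + (1 / ρ) * (-a + b + (γ / 2) * log (c / D) + α)) := by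
  rw [log_sqrt_div_mul_pow hc hD (by positivity), one_div (t ^ 2), log_inv, log_pow]
  field_simp
  linear_combination (2 * log t) * hγd

theorem explicit_solution_exploratory_HJB_general
    {d : ℕ} (hd : 1 ≤ d) (ρ γ σZ κ α ζ : ℝ)
    (σ : Matrix (Fin d) (Fin d) ℝ) (hσ : IsUnit σ.det)
    (hρ : 0 < ρ) (hγ : γ = ρ / d)
    (v v' v'' : ℝ → ℝ)
    (hv : ∀ y : ℝ, v y = Real.log (1 + y)
      + (1 / ρ) * (-(1 / 2) * σZ ^ 2 * κ ^ 2 + Real.sqrt (1 - κ ^ 2) * ζ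
          + (γ / 2) * Real.log ((2 * π * γ) ^ d / |(σ * σᵀ).det|) + α))
    (hv' : ∀ y : ℝ, v' y = 1 / (1 + y))
    (hv'' : ∀ y : ℝ, v'' y = -(1 / (1 + y) ^ 2)) :
    (∀ y ≥ (0 : ℝ), HasDerivAt v (v' y) y) ∧
    (∀ y ≥ (0 : ℝ), HasDerivAt v' (v'' y) y) ∧
    (∀ y > (0 : ℝ),
      (1 / 2) * σZ ^ 2 * κ ^ 2 * (y + 1) ^ 2 * v'' y
        + Real.sqrt (1 - κ ^ 2) * ζ * (y + 1) * v' y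
        + γ * Real.log (Real.sqrt ((2 * π * γ) ^ d / (|(σ * σᵀ).det| * (-(v'' y)) ^ d)))
        - α * (v' y) ^ 2 / v'' y = ρ * v y) ∧
    v' 0 = 1 := by
  have hd0 : (d : ℝ) ≠ 0 := Nat.cast_ne_zero.mpr (Nat.one_le_iff_ne_zero.mp hd)
  have hγd : γ * d = ρ := by rw [hγ, div_mul_cancel₀ ρ hd0]
  have hγpos : 0 < γ := by rw [hγ]; positivity
  refine ⟨fun y hy => ?_, fun y hy => ?_, fun y hy => ?_, by norm_num [hv']⟩
  · rw [funext hv, hv']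
    exact (hasDerivAt_log_one_add (by linarith)).add_const _
  · rw [funext hv', hv'']
    exact hasDerivAt_one_div_one_add (by linarith)
  · rw [hv, hv', hv'', neg_neg, add_comm y 1]
    linear_combination log_ansatz_solves_hjb (a := 1 / 2 * σZ ^ 2 * κ ^ 2) (b := √(1 - κ ^ 2) * ζ)
      (c := (2 * π * γ) ^ d) (α := α) (t := 1 + y)
      hγd hρ.ne' (by positivity) (abs_det_mul_transpose_pos hσ) (by linarith)

/-- With γ = ρ/d, the function
v(y) = ln(1+y) + (1/ρ)(-(1/2)σ_Z²κ² + √(1-κ²)ζ + (γ/2)ln((2πγ)^d/|det(σσᵀ)|) + α)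
solves the exploratory HJB equation with Neumann boundary condition v'(0) = 1. -/
theorem explicit_solution_exploratory_HJB
    {d : ℕ} (hd : 1 ≤ d) (ρ γ σZ κ α ζ : ℝ) (μv η : Fin d → ℝ)
    (σ : Matrix (Fin d) (Fin d) ℝ) (hσ : IsUnit σ.det)
    (hρ : 0 < ρ) (hγ : γ = ρ / d) (hσZ : 0 < σZ) (hκ : κ ∈ Set.Icc (-1 : ℝ) 1)
    (hα : α = (1 / 2) * (μv ⬝ᵥ ((σ * σᵀ)⁻¹ *ᵥ μv)))
    (hζ : ζ = σZ * (η ⬝ᵥ (σ⁻¹ *ᵥ μv)))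
    (v v' v'' : ℝ → ℝ)
    (hv : ∀ y : ℝ, v y = Real.log (1 + y)
      + (1 / ρ) * (-(1 / 2) * σZ ^ 2 * κ ^ 2 + Real.sqrt (1 - κ ^ 2) * ζ
          + (γ / 2) * Real.log ((2 * π * γ) ^ d / |(σ * σᵀ).det|) + α))
    (hv' : ∀ y : ℝ, v' y = 1 / (1 + y))
    (hv'' : ∀ y : ℝ, v'' y = -(1 / (1 + y) ^ 2)) :
    (∀ y ≥ (0 : ℝ), HasDerivAt v (v' y) y) ∧
    (∀ y ≥ (0 : ℝ), HasDerivAt v' (v'' y) y) ∧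
    (∀ y > (0 : ℝ),
      (1 / 2) * σZ ^ 2 * κ ^ 2 * (y + 1) ^ 2 * v'' y
        + Real.sqrt (1 - κ ^ 2) * ζ * (y + 1) * v' y
        + γ * Real.log (Real.sqrt ((2 * π * γ) ^ d / (|(σ * σᵀ).det| * (-(v'' y)) ^ d)))
        - α * (v' y) ^ 2 / v'' y = ρ * v y) ∧
    v' 0 = 1 :=
  explicit_solution_exploratory_HJB_general hd ρ γ σZ κ α ζ σ hσ hρ hγ v v' v'' hv hv' hv''
end

section
/- Under the ansatz v(y) = A·ln(1+y) + B substituted into the exploratory HJB equation (1/2)σ_Z²κ²(y+1)²v'' + √(1-κ²)ζ(y+1)v' + γln(√((2πγ)^d/(|det(σσᵀ)|(-v'')^d))) - α(v')²/v'' = ρv with boundary condition v'(0) = 1, the equation holds for all y > 0 if and only if A = 1, γ = ρ/d, and B = (1/ρ)(-(1/2)σ_Z²κ² + √(1-κ²)ζ + (γ/2)ln((2πγ)^d/|det(σσᵀ)|) + α). -/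
/-!
With `A = 1` forced by the Neumann condition, the ansatz turns every term of the HJB equation
into a constant except the entropy term, which is `γ d log (1 + y)` plus a constant. Both sides
are then affine in `log (1 + y)`, which takes every positive value on `y > 0`, so the equation
holds identically iff the slopes (`γ d = ρ`) and the intercepts (`ρ B = …`) agree.
-/

open Real Matrix

lemma forall_add_mul_log_one_add_eq_iff {a b c e : ℝ} :
    (∀ y > (0 : ℝ), a + b * log (1 + y) = e + c * log (1 + y)) ↔ a = e ∧ b = c := by
  refine ⟨fun h => ?_, fun ⟨hae, hbc⟩ _ _ => by rw [hae, hbc]⟩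
  have affine_eq : ∀ t > (0 : ℝ), a + b * t = e + c * t := fun t ht => by
    have hy : 0 < exp t - 1 := by linarith [add_one_lt_exp ht.ne']
    simpa only [add_sub_cancel, log_exp] using h (exp t - 1) hy
  have h₁ := affine_eq 1 one_pos
  have h₂ := affine_eq 2 two_pos
  constructor <;> linarith

lemma log_sqrt_div_mul_inv_sq_pow (d : ℕ) {c D y : ℝ} (hc : 0 < c) (hD : 0 < D)
    (hy : 0 < 1 + y) :
    log √(c / (D * (1 / (1 + y) ^ 2) ^ d)) = log (c / D) / 2 + d * log (1 + y) := by
  have hsplit : c / (D * (1 / (1 + y) ^ 2) ^ d) = c / D * (1 + y) ^ (2 * d) := by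
    rw [div_pow, one_pow, pow_mul]
    field_simp
  rw [hsplit, log_sqrt (by positivity), log_mul (by positivity) (by positivity), log_pow]
  push_cast
  ring

lemma exploratoryHJB_lhs_log_ansatz (d : ℕ) {γ D : ℝ} (σZ κ ζ α : ℝ) (hγ : 0 < γ)
    (hD : 0 < D) {y : ℝ} (hy : 0 < 1 + y) :
    (1 / 2) * σZ ^ 2 * κ ^ 2 * (y + 1) ^ 2 * (-(1 / (1 + y) ^ 2))
        + √(1 - κ ^ 2) * ζ * (y + 1) * (1 / (1 + y))
        + γ * log √((2 * π * γ) ^ d / (D * (1 / (1 + y) ^ 2) ^ d))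
        - α * (1 / (1 + y)) ^ 2 / (-(1 / (1 + y) ^ 2))
      = (-(1 / 2) * σZ ^ 2 * κ ^ 2 + √(1 - κ ^ 2) * ζ
          + (γ / 2) * log ((2 * π * γ) ^ d / D) + α) + γ * d * log (1 + y) := by
  rw [log_sqrt_div_mul_inv_sq_pow d (by positivity) hD hy]
  field_simp
  ring

theorem ansatz_solves_exploratory_HJB_iff_general
    {d : ℕ} (ρ γ σZ κ α ζ A B : ℝ)
    (σ : Matrix (Fin d) (Fin d) ℝ) (hσ : IsUnit σ.det)
    (hρ : 0 < ρ) (hγ : 0 < γ) :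
    ((∀ y > (0 : ℝ),
        (1 / 2) * σZ ^ 2 * κ ^ 2 * (y + 1) ^ 2 * (-(A / (1 + y) ^ 2))
          + Real.sqrt (1 - κ ^ 2) * ζ * (y + 1) * (A / (1 + y))
          + γ * Real.log (Real.sqrt ((2 * π * γ) ^ d / (|(σ * σᵀ).det| * (A / (1 + y) ^ 2) ^ d)))
          - α * (A / (1 + y)) ^ 2 / (-(A / (1 + y) ^ 2))
          = ρ * (A * Real.log (1 + y) + B)) ∧
      A / (1 + (0 : ℝ)) = 1)
    ↔ (A = 1 ∧ γ = ρ / d ∧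
        B = (1 / ρ) * (-(1 / 2) * σZ ^ 2 * κ ^ 2 + Real.sqrt (1 - κ ^ 2) * ζ
          + (γ / 2) * Real.log ((2 * π * γ) ^ d / |(σ * σᵀ).det|) + α)) := by
  have hD : 0 < |(σ * σᵀ).det| := by
    rw [det_mul, det_transpose, abs_pos]
    exact mul_ne_zero hσ.ne_zero hσ.ne_zero
  rw [add_zero, div_one]
  constructor
  · rintro ⟨hHJB, rfl⟩
    obtain ⟨hconst, hslope⟩ := (forall_add_mul_log_one_add_eq_iff (e := ρ * B) (c := ρ)).1
      fun y hy => (exploratoryHJB_lhs_log_ansatz d σZ κ ζ α hγ hD (by linarith)).symm.trans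
        ((hHJB y hy).trans (by ring))
    have hd : (d : ℝ) ≠ 0 := by rintro hd; rw [hd, mul_zero] at hslope; linarith
    refine ⟨rfl, eq_div_of_mul_eq hd hslope, ?_⟩
    rw [hconst]
    field_simp
  · rintro ⟨rfl, rfl, rfl⟩
    have hd : (d : ℝ) ≠ 0 := by rintro hd; simp [hd] at hγ
    refine ⟨fun y hy => ?_, rfl⟩
    rw [exploratoryHJB_lhs_log_ansatz d σZ κ ζ α hγ hD (by linarith)]
    field_simp
    ring

/-- Under the ansatz v(y) = A·ln(1+y) + B, the exploratory HJB equation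
(with v'(y) = A/(1+y), v''(y) = -A/(1+y)²) together with the Neumann condition v'(0) = 1
holds for all y > 0 if and only if A = 1, γ = ρ/d and
B = (1/ρ)(-(1/2)σ_Z²κ² + √(1-κ²)ζ + (γ/2)ln((2πγ)^d/|det(σσᵀ)|) + α). -/
theorem ansatz_solves_exploratory_HJB_iff
    {d : ℕ} (hd : 1 ≤ d) (ρ γ σZ κ α ζ A B : ℝ)
    (σ : Matrix (Fin d) (Fin d) ℝ) (hσ : IsUnit σ.det)
    (hρ : 0 < ρ) (hγ : 0 < γ) (hα : 0 < α) (hσZ : 0 < σZ) (hκ : κ ∈ Set.Icc (-1 : ℝ) 1) :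
    ((∀ y > (0 : ℝ),
        (1 / 2) * σZ ^ 2 * κ ^ 2 * (y + 1) ^ 2 * (-(A / (1 + y) ^ 2))
          + Real.sqrt (1 - κ ^ 2) * ζ * (y + 1) * (A / (1 + y))
          + γ * Real.log (Real.sqrt ((2 * π * γ) ^ d / (|(σ * σᵀ).det| * (A / (1 + y) ^ 2) ^ d)))
          - α * (A / (1 + y)) ^ 2 / (-(A / (1 + y) ^ 2))
          = ρ * (A * Real.log (1 + y) + B)) ∧
      A / (1 + (0 : ℝ)) = 1)
    ↔ (A = 1 ∧ γ = ρ / d ∧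
        B = (1 / ρ) * (-(1 / 2) * σZ ^ 2 * κ ^ 2 + Real.sqrt (1 - κ ^ 2) * ζ
          + (γ / 2) * Real.log ((2 * π * γ) ^ d / |(σ * σᵀ).det|) + α)) :=
  ansatz_solves_exploratory_HJB_iff_general ρ γ σZ κ α ζ A B σ hσ hρ hγ
end

section
/- The value function ŵ(x,z) = sup_θ E[-∫₀^∞ e^{-ρt}dL^X_t | X₀=x, Z₀=z] of the auxiliary control problem is 1-Lipschitz and nondecreasing in x: for all x₁, x₂ ≥ 0 and z > 0, if x₁ ≤ x₂ then ŵ(x₁,z) ≤ ŵ(x₂,z) and ŵ(x₂,z) - ŵ(x₁,z) ≤ x₂ - x₁. -/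
open MeasureTheory Set Filter Topology

noncomputable section

lemma max_aux {a b m m' : ℝ} (hab : a ≤ b) (hm : m ≤ m') :
    max b m' + max a m ≤ max a m' + max b m := by
  simp only [max_def]
  split_ifs <;> linarith

lemma key_split (f₁ f₂ : StieltjesFunction ℝ) (c ρ : ℝ) (hρ : 0 < ρ) (hc : 0 ≤ c)
    (hle : ∀ t, 0 ≤ t → f₁ t ≤ f₂ t)
    (h00 : f₂ 0 - f₁ 0 = c)
    (hdiff : ∀ s t, 0 ≤ s → s ≤ t → f₂ t - f₁ t ≤ f₂ s - f₁ s)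
    (hint1 : IntegrableOn (fun t => Real.exp (-ρ * t)) (Set.Ioi 0) f₁.measure) :
    (∫ t in Set.Ioi (0:ℝ), Real.exp (-ρ * t) ∂f₂.measure) ≤
      (∫ t in Set.Ioi (0:ℝ), Real.exp (-ρ * t) ∂f₁.measure) ∧
    (∫ t in Set.Ioi (0:ℝ), Real.exp (-ρ * t) ∂f₁.measure) ≤
      (∫ t in Set.Ioi (0:ℝ), Real.exp (-ρ * t) ∂f₂.measure) + c := by
  classical
  set hfun : ℝ → ℝ := fun t => if t ≤ 0 then 0 else f₁ t - f₂ t + c with hfun_def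
  have hmono : Monotone hfun := by
    intro s t hst
    simp only [hfun_def]
    rcases le_or_gt s 0 with hs | hs <;> rcases le_or_gt t 0 with ht | ht
    · rw [if_pos hs, if_pos ht]
    · rw [if_pos hs, if_neg (not_le.2 ht)]
      have := hdiff 0 t le_rfl ht.le
      linarith
    · exact absurd (hst.trans ht) (not_le.2 hs)
    · rw [if_neg (not_le.2 hs), if_neg (not_le.2 ht)]
      have := hdiff s t hs.le hst
      linarith
  have heqg : ∀ u, 0 ≤ u → hfun u = f₁ u - f₂ u + c := by
    intro u hu
    simp only [hfun_def]
    split_ifs with h1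
    · have : u = 0 := le_antisymm h1 hu
      rw [this]; linarith
    · rfl
  have hrc : ∀ t, ContinuousWithinAt hfun (Ici t) t := by
    intro t
    rcases lt_or_ge t 0 with ht | ht
    · have hmem : Iio (0:ℝ) ∈ 𝓝 t := isOpen_Iio.mem_nhds ht
      refine (continuousWithinAt_const (b := (0:ℝ))).congr_of_eventuallyEq ?_ ?_
      · filter_upwards [mem_nhdsWithin_of_mem_nhds hmem] with y hy
        have hy' : y ≤ 0 := le_of_lt (Set.mem_Iio.1 hy)
        simp [hfun_def, hy']
      · simp [hfun_def, ht.le]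
    · have hg : ContinuousWithinAt (fun u => f₁ u - f₂ u + c) (Ici t) t :=
        (((f₁.right_continuous' t).sub (f₂.right_continuous' t)).add continuousWithinAt_const)
      refine hg.congr ?_ ?_
      · intro y hy
        exact heqg y (ht.trans hy)
      · exact heqg t ht
  set h : StieltjesFunction ℝ := ⟨hfun, hmono, hrc⟩ with h_def
  have happ : ∀ u, h u = hfun u := fun u => rfl
  have h0 : h 0 = 0 := by simp [happ, hfun_def]
  have hboundall : ∀ t, h t ≤ c := by
    intro t
    rw [happ]
    simp only [hfun_def]
    split_ifs with h1
    · exact hc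
    · have := hle t (le_of_lt (not_le.1 h1)); linarith
  have hbdd : BddAbove (Set.range h) := ⟨c, by rintro _ ⟨t, rfl⟩; exact hboundall t⟩
  have htop : Tendsto h atTop (𝓝 (⨆ t, h t)) := tendsto_atTop_ciSup h.mono hbdd
  have hbot : Tendsto h atBot (𝓝 0) := by
    refine (tendsto_const_nhds : Tendsto (fun _ : ℝ => (0:ℝ)) atBot (𝓝 0)).congr' ?_
    filter_upwards [Filter.Iic_mem_atBot (0:ℝ)] with y hy
    have hy' : y ≤ 0 := Set.mem_Iic.1 hy
    simp [happ, hfun_def, hy']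
  have hsup_nonneg : 0 ≤ ⨆ t, h t := h0 ▸ le_ciSup hbdd 0
  have hsup_le : (⨆ t, h t) ≤ c := ciSup_le hboundall
  have hμuniv : h.measure univ = ENNReal.ofReal ((⨆ t, h t) - 0) := h.measure_univ hbot htop
  have hμIoi_le : h.measure (Ioi 0) ≤ ENNReal.ofReal c := by
    calc h.measure (Ioi 0) ≤ h.measure univ := measure_mono (subset_univ _)
    _ = ENNReal.ofReal ((⨆ t, h t) - 0) := hμuniv
    _ ≤ ENNReal.ofReal c := ENNReal.ofReal_le_ofReal (by linarith)
  have hμIoi_lt : h.measure (Ioi 0) < ⊤ := lt_of_le_of_lt hμIoi_le ENNReal.ofReal_lt_top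
  -- measure splitting
  have key : f₁.measure.restrict (Ioi 0) =
      f₂.measure.restrict (Ioi 0) + h.measure.restrict (Ioi 0) := by
    refine MeasureTheory.Measure.ext_of_Ioc' _ _ (fun a b hab => ?_) (fun a b hab => ?_)
    · rw [Measure.restrict_apply measurableSet_Ioc]
      refine (lt_of_le_of_lt (measure_mono inter_subset_left) ?_).ne
      rw [f₁.measure_Ioc]
      exact ENNReal.ofReal_lt_top
    · rw [Measure.add_apply, Measure.restrict_apply measurableSet_Ioc,
        Measure.restrict_apply measurableSet_Ioc, Measure.restrict_apply measurableSet_Ioc,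
        Set.Ioc_inter_Ioi]
      set a' := a ⊔ 0 with ha'_def
      rcases le_or_gt b a' with hba | hab'
      · rw [Set.Ioc_eq_empty (not_lt.2 hba)]
        simp
      · have ha' : (0:ℝ) ≤ a' := le_sup_right
        have hb : (0:ℝ) ≤ b := ha'.trans hab'.le
        rw [f₁.measure_Ioc, f₂.measure_Ioc, h.measure_Ioc,
          ← ENNReal.ofReal_add (sub_nonneg.2 (f₂.mono hab'.le))
            (sub_nonneg.2 (h.mono hab'.le))]
        congr 1
        rw [happ, happ, heqg b hb, heqg a' ha']
        ring
  have hint1' : Integrable (fun t => Real.exp (-ρ * t))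
      (f₂.measure.restrict (Ioi 0) + h.measure.restrict (Ioi 0)) := by
    rw [← key]; exact hint1
  obtain ⟨h2, hh⟩ := integrable_add_measure.mp hint1'
  have hsplit : (∫ t in Set.Ioi (0:ℝ), Real.exp (-ρ * t) ∂f₁.measure) =
      (∫ t in Set.Ioi (0:ℝ), Real.exp (-ρ * t) ∂f₂.measure) +
      (∫ t in Set.Ioi (0:ℝ), Real.exp (-ρ * t) ∂h.measure) := by
    rw [show (∫ t in Set.Ioi (0:ℝ), Real.exp (-ρ * t) ∂f₁.measure) =
        ∫ t, Real.exp (-ρ * t) ∂(f₁.measure.restrict (Ioi 0)) from rfl, key,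
      integral_add_measure h2 hh]
  have hpos : 0 ≤ ∫ t in Set.Ioi (0:ℝ), Real.exp (-ρ * t) ∂h.measure :=
    integral_nonneg fun t => (Real.exp_nonneg _)
  have hup : (∫ t in Set.Ioi (0:ℝ), Real.exp (-ρ * t) ∂h.measure) ≤ c := by
    calc (∫ t in Set.Ioi (0:ℝ), Real.exp (-ρ * t) ∂h.measure)
        ≤ ∫ _ in Set.Ioi (0:ℝ), (1:ℝ) ∂h.measure := by
          refine setIntegral_mono_on hh
            (integrableOn_const hμIoi_lt.ne) measurableSet_Ioi ?_
          intro x hx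
          rw [Real.exp_le_one_iff]
          have : (0:ℝ) < x := hx
          nlinarith
    _ = (h.measure (Ioi 0)).toReal := by rw [setIntegral_const]; simp; rfl
    _ ≤ c := ENNReal.toReal_le_of_le_ofReal hc hμIoi_le
  constructor
  · linarith
  · linarith

/-- The value function
ŵ(x) = sup_θ E[-∫₀^∞ e^{-ρt}dL^X_t], where L^X(x)_t = x ∨ sup_{s∈[0,t]}D^θ_s is the
running-maximum regulator started at level x (the benchmark level z being absorbed
into the difference processes D^θ with D^θ₀ = 0), is nondecreasing and 1-Lipschitz
in the initial level x ≥ 0. -/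
theorem value_function_monotone_lipschitz_in_x
    {Ω ι : Type*} [MeasurableSpace Ω] (P : Measure Ω) [IsProbabilityMeasure P]
    (ρ : ℝ) (hρ : 0 < ρ)
    (D : ι → ℝ → Ω → ℝ)
    (hDc : ∀ (θ : ι) (ω : Ω), Continuous fun t => D θ t ω)
    (hD0 : ∀ (θ : ι) (ω : Ω), D θ 0 ω = 0)
    (LS : ℝ → ι → Ω → StieltjesFunction ℝ)
    (hLS : ∀ (x : ℝ) (θ : ι) (ω : Ω) (t : ℝ), 0 ≤ x → 0 ≤ t →
      LS x θ ω t = max x (⨆ s : Set.Icc (0 : ℝ) t, D θ (s : ℝ) ω))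
    (hInt : ∀ (x : ℝ) (θ : ι) (ω : Ω),
      IntegrableOn (fun t => Real.exp (-ρ * t)) (Set.Ioi 0) (LS x θ ω).measure)
    (hInt2 : ∀ (x : ℝ) (θ : ι),
      Integrable (fun ω =>
        ∫ t in Set.Ioi (0 : ℝ), Real.exp (-ρ * t) ∂(LS x θ ω).measure) P)
    (what : ℝ → ℝ)
    (hwhat : ∀ x : ℝ, what x = ⨆ θ : ι,
      ∫ ω, (-(∫ t in Set.Ioi (0 : ℝ), Real.exp (-ρ * t) ∂(LS x θ ω).measure)) ∂P) :
    ∀ x₁ x₂ : ℝ, 0 ≤ x₁ → x₁ ≤ x₂ →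
      what x₁ ≤ what x₂ ∧ what x₂ - what x₁ ≤ x₂ - x₁ := by
  intro x₁ x₂ hx₁ hx
  have hx₂ : (0:ℝ) ≤ x₂ := hx₁.trans hx
  have hc : (0:ℝ) ≤ x₂ - x₁ := sub_nonneg.2 hx
  -- pointwise key inequality
  have key : ∀ (θ : ι) (ω : Ω),
      (∫ t in Set.Ioi (0:ℝ), Real.exp (-ρ * t) ∂(LS x₂ θ ω).measure) ≤
        (∫ t in Set.Ioi (0:ℝ), Real.exp (-ρ * t) ∂(LS x₁ θ ω).measure) ∧
      (∫ t in Set.Ioi (0:ℝ), Real.exp (-ρ * t) ∂(LS x₁ θ ω).measure) ≤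
        (∫ t in Set.Ioi (0:ℝ), Real.exp (-ρ * t) ∂(LS x₂ θ ω).measure) + (x₂ - x₁) := by
    intro θ ω
    have hM0 : (⨆ s : Set.Icc (0:ℝ) 0, D θ (s:ℝ) ω) = 0 := by
      have hne : Nonempty (Set.Icc (0:ℝ) 0) := ⟨⟨0, by simp⟩⟩
      have heq0 : ∀ s : Set.Icc (0:ℝ) 0, D θ (s:ℝ) ω = 0 := by
        intro s
        have hs := s.2
        simp only [Set.mem_Icc] at hs
        have : (s:ℝ) = 0 := le_antisymm hs.2 hs.1
        rw [this, hD0]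
      rw [iSup_congr heq0]
      exact ciSup_const
    have hMbdd : ∀ t : ℝ, BddAbove (Set.range fun v : Set.Icc (0:ℝ) t => D θ (v:ℝ) ω) := by
      intro t
      obtain ⟨b, hb⟩ :=
        (isCompact_Icc.image_of_continuousOn
          ((hDc θ ω).continuousOn : ContinuousOn (fun r => D θ r ω) (Set.Icc 0 t))).bddAbove
      exact ⟨b, by rintro _ ⟨v, rfl⟩; exact hb ⟨v.1, v.2, rfl⟩⟩
    have hMmono : ∀ s t : ℝ, 0 ≤ s → s ≤ t →
        (⨆ u : Set.Icc (0:ℝ) s, D θ (u:ℝ) ω) ≤ ⨆ u : Set.Icc (0:ℝ) t, D θ (u:ℝ) ω := by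
      intro s t hs hst
      have hne : Nonempty (Set.Icc (0:ℝ) s) := ⟨⟨0, by simp [hs]⟩⟩
      refine ciSup_le fun u => ?_
      refine le_ciSup_of_le (hMbdd t) ⟨(u:ℝ), ?_⟩ le_rfl
      have hu := u.2
      simp only [Set.mem_Icc] at hu ⊢
      exact ⟨hu.1, hu.2.trans hst⟩
    refine key_split (LS x₁ θ ω) (LS x₂ θ ω) (x₂ - x₁) ρ hρ hc ?_ ?_ ?_ (hInt x₁ θ ω)
    · intro t ht
      rw [hLS x₁ θ ω t hx₁ ht, hLS x₂ θ ω t hx₂ ht]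
      exact max_le_max hx le_rfl
    · rw [hLS x₁ θ ω 0 hx₁ le_rfl, hLS x₂ θ ω 0 hx₂ le_rfl, hM0,
        max_eq_left hx₁, max_eq_left hx₂]
    · intro s t hs hst
      have ht : (0:ℝ) ≤ t := hs.trans hst
      rw [hLS x₁ θ ω s hx₁ hs, hLS x₂ θ ω s hx₂ hs,
        hLS x₁ θ ω t hx₁ ht, hLS x₂ θ ω t hx₂ ht]
      have := max_aux hx (hMmono s t hs hst)
      linarith
  set A : ι → ℝ := fun θ =>
    ∫ ω, (-(∫ t in Set.Ioi (0:ℝ), Real.exp (-ρ * t) ∂(LS x₁ θ ω).measure)) ∂P with hA_def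
  set B : ι → ℝ := fun θ =>
    ∫ ω, (-(∫ t in Set.Ioi (0:ℝ), Real.exp (-ρ * t) ∂(LS x₂ θ ω).measure)) ∂P with hB_def
  have hAB : ∀ θ, A θ ≤ B θ := by
    intro θ
    exact integral_mono (hInt2 x₁ θ).neg (hInt2 x₂ θ).neg
      (fun ω => neg_le_neg (key θ ω).1)
  have hBA : ∀ θ, B θ ≤ A θ + (x₂ - x₁) := by
    intro θ
    have hnegI : Integrable (fun ω =>
        -(∫ t in Set.Ioi (0:ℝ), Real.exp (-ρ * t) ∂(LS x₁ θ ω).measure)) P :=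
      (hInt2 x₁ θ).neg
    have step : B θ ≤ ∫ ω, ((-(∫ t in Set.Ioi (0:ℝ), Real.exp (-ρ * t)
        ∂(LS x₁ θ ω).measure)) + (x₂ - x₁)) ∂P := by
      refine integral_mono (hInt2 x₂ θ).neg
        (hnegI.add (integrable_const _)) (fun ω => ?_)
      have := (key θ ω).2
      simp only
      linarith
    rw [integral_add hnegI (integrable_const _), integral_const,
      probReal_univ, one_smul] at step
    exact step
  have hw1 : what x₁ = ⨆ θ, A θ := hwhat x₁
  have hw2 : what x₂ = ⨆ θ, B θ := hwhat x₂
  rw [hw1, hw2]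
  rcases isEmpty_or_nonempty ι with hι | hι
  · rw [Real.iSup_of_isEmpty, Real.iSup_of_isEmpty]
    exact ⟨le_rfl, by linarith⟩
  · by_cases hbdd : BddAbove (Set.range B)
    · have hbddA : BddAbove (Set.range A) := by
        obtain ⟨b, hb⟩ := hbdd
        exact ⟨b, by rintro _ ⟨θ, rfl⟩; exact (hAB θ).trans (hb ⟨θ, rfl⟩)⟩
      constructor
      · exact ciSup_mono hbdd hAB
      · have hsB : (⨆ θ, B θ) ≤ (⨆ θ, A θ) + (x₂ - x₁) :=
          ciSup_le fun θ => (hBA θ).trans (add_le_add_left (le_ciSup hbddA θ) _)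
        linarith
    · have hbddA : ¬ BddAbove (Set.range A) := by
        intro ⟨b, hb⟩
        exact hbdd ⟨b + (x₂ - x₁), by
          rintro _ ⟨θ, rfl⟩
          exact (hBA θ).trans (add_le_add_left (hb ⟨θ, rfl⟩) _)⟩
      rw [Real.iSup_of_not_bddAbove hbdd, Real.iSup_of_not_bddAbove hbddA]
      exact ⟨le_rfl, by linarith⟩
end
end

section
/- Let x ≥ 0 and let D: [0,∞) → ℝ be continuous with x ≥ D(0). Define L(t;x) = x ∨ sup_{s∈[0,t]}D(s). Then for x₁ ≤ x₂: (i) 0 ≤ L(t;x₂) - L(t;x₁) ≤ x₂ - x₁ for all t; (ii) t ↦ L(t;x₂) - L(t;x₁) is nonincreasing; (iii) consequently, for ρ > 0, 0 ≤ ∫₀^∞ e^{-ρt}dL(t;x₁) - ∫₀^∞ e^{-ρt}dL(t;x₂) ≤ x₂ - x₁, where the integrals are Lebesgue–Stieltjes integrals (assumed finite). -/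
open MeasureTheory

noncomputable section

private lemma md2 {x₁ x₂ a : ℝ} (hx : x₁ ≤ x₂) :
    max x₂ a - max x₁ a ≤ x₂ - x₁ := by
  rcases max_cases x₂ a with ⟨h1, h2⟩ | ⟨h1, h2⟩ <;>
  rcases max_cases x₁ a with ⟨h3, h4⟩ | ⟨h3, h4⟩ <;> linarith

private lemma md3 {x₁ x₂ a b : ℝ} (hx : x₁ ≤ x₂) (hab : a ≤ b) :
    max x₂ b - max x₁ b ≤ max x₂ a - max x₁ a := by
  rcases max_cases x₂ b with ⟨h1, h2⟩ | ⟨h1, h2⟩ <;>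
  rcases max_cases x₁ b with ⟨h3, h4⟩ | ⟨h3, h4⟩ <;>
  rcases max_cases x₂ a with ⟨h5, h6⟩ | ⟨h5, h6⟩ <;>
  rcases max_cases x₁ a with ⟨h7, h8⟩ | ⟨h7, h8⟩ <;> linarith

private lemma exp_int (ρ t : ℝ) (hρ : 0 < ρ) :
    ∫ s in Set.Ioi t, ρ * Real.exp (-ρ * s) = Real.exp (-ρ * t) := by
  have h : ∀ s : ℝ, Real.exp (-ρ * s) = Real.exp (-(ρ * s)) := fun s => by ring_nf
  have h2 := integral_comp_mul_left_Ioi (fun x => Real.exp (-x)) t hρ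
  rw [integral_const_mul]
  simp only [h]
  rw [h2, integral_exp_neg_Ioi, smul_eq_mul]
  field_simp

/-- Fubini computation for the Stieltjes integral of `e^{-ρt}`. -/
private lemma key_fubini (ρ : ℝ) (hρ : 0 < ρ) (f : StieltjesFunction ℝ) :
    ∫⁻ t in Set.Ioi (0 : ℝ), ENNReal.ofReal (Real.exp (-ρ * t)) ∂f.measure
      = ∫⁻ s in Set.Ioi (0 : ℝ),
          ENNReal.ofReal (ρ * Real.exp (-ρ * s)) * ENNReal.ofReal (f s - f 0) := by
  set G : ℝ × ℝ → ENNReal := fun p =>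
    ENNReal.ofReal (ρ * Real.exp (-ρ * p.2)) * Set.indicator {q : ℝ × ℝ | q.1 ≤ q.2} 1 p
    with hG
  have hGmeas : Measurable G := by
    apply Measurable.mul
    · exact (measurable_snd.const_mul (-ρ)).exp.const_mul ρ |>.ennreal_ofReal
    · exact measurable_one.indicator (measurableSet_le measurable_fst measurable_snd)
  have step1 : ∀ t ∈ Set.Ioi (0 : ℝ),
      (∫⁻ s in Set.Ioi (0 : ℝ), G (t, s)) = ENNReal.ofReal (Real.exp (-ρ * t)) := by
    intro t ht
    have hpt : ∀ s : ℝ, G (t, s)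
        = Set.indicator (Set.Ici t) (fun s => ENNReal.ofReal (ρ * Real.exp (-ρ * s))) s := by
      intro s
      by_cases h : t ≤ s <;> simp [hG, Set.indicator, h]
    calc (∫⁻ s in Set.Ioi (0 : ℝ), G (t, s))
        = ∫⁻ s in Set.Ioi (0 : ℝ),
            Set.indicator (Set.Ici t) (fun s => ENNReal.ofReal (ρ * Real.exp (-ρ * s))) s :=
          lintegral_congr fun s => hpt s
      _ = ∫⁻ s in Set.Ici t ∩ Set.Ioi (0 : ℝ),
            ENNReal.ofReal (ρ * Real.exp (-ρ * s)) := by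
          rw [lintegral_indicator measurableSet_Ici _, Measure.restrict_restrict measurableSet_Ici]
      _ = ∫⁻ s in Set.Ici t, ENNReal.ofReal (ρ * Real.exp (-ρ * s)) := by
          have hset : Set.Ici t ∩ Set.Ioi (0 : ℝ) = Set.Ici t :=
            Set.inter_eq_left.2 fun s hs => Set.mem_Ioi.2 (lt_of_lt_of_le (Set.mem_Ioi.1 ht) (Set.mem_Ici.1 hs))
          rw [hset]
      _ = ∫⁻ s in Set.Ioi t, ENNReal.ofReal (ρ * Real.exp (-ρ * s)) :=
          (setLIntegral_congr (MeasureTheory.Ioi_ae_eq_Ici (μ := volume) (a := t))).symm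
      _ = ENNReal.ofReal (Real.exp (-ρ * t)) := by
          rw [← ofReal_integral_eq_lintegral_ofReal
            ((exp_neg_integrableOn_Ioi t hρ).const_mul ρ)
            (Filter.Eventually.of_forall fun s =>
              mul_nonneg hρ.le (Real.exp_pos _).le), exp_int ρ t hρ]
  have step3 : ∀ s : ℝ,
      (∫⁻ t in Set.Ioi (0 : ℝ), G (t, s) ∂f.measure)
        = ENNReal.ofReal (ρ * Real.exp (-ρ * s)) * ENNReal.ofReal (f s - f 0) := by
    intro s
    have hpt : ∀ t : ℝ, G (t, s)
        = Set.indicator (Set.Iic s)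
            (fun _ => ENNReal.ofReal (ρ * Real.exp (-ρ * s))) t := by
      intro t
      by_cases h : t ≤ s <;> simp [hG, Set.indicator, h]
    calc (∫⁻ t in Set.Ioi (0 : ℝ), G (t, s) ∂f.measure)
        = ∫⁻ t in Set.Ioi (0 : ℝ),
            Set.indicator (Set.Iic s)
              (fun _ => ENNReal.ofReal (ρ * Real.exp (-ρ * s))) t ∂f.measure :=
          lintegral_congr fun t => hpt t
      _ = ∫⁻ _ in Set.Iic s ∩ Set.Ioi (0 : ℝ),
            ENNReal.ofReal (ρ * Real.exp (-ρ * s)) ∂f.measure := by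
          rw [lintegral_indicator measurableSet_Iic _, Measure.restrict_restrict measurableSet_Iic]
      _ = ENNReal.ofReal (ρ * Real.exp (-ρ * s)) * f.measure (Set.Ioc 0 s) := by
          rw [setLIntegral_const]
          congr 1
          rw [Set.inter_comm, Set.Ioi_inter_Iic]
      _ = ENNReal.ofReal (ρ * Real.exp (-ρ * s)) * ENNReal.ofReal (f s - f 0) := by
          rw [f.measure_Ioc]
  calc ∫⁻ t in Set.Ioi (0 : ℝ), ENNReal.ofReal (Real.exp (-ρ * t)) ∂f.measure
      = ∫⁻ t in Set.Ioi (0 : ℝ), ∫⁻ s in Set.Ioi (0 : ℝ), G (t, s) ∂volume ∂f.measure :=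
        (setLIntegral_congr_fun measurableSet_Ioi
          (fun t ht => (step1 t ht).symm))
    _ = ∫⁻ s in Set.Ioi (0 : ℝ), ∫⁻ t in Set.Ioi (0 : ℝ), G (t, s) ∂f.measure ∂volume :=
        lintegral_lintegral_swap (hGmeas.aemeasurable)
    _ = ∫⁻ s in Set.Ioi (0 : ℝ),
          ENNReal.ofReal (ρ * Real.exp (-ρ * s)) * ENNReal.ofReal (f s - f 0) :=
        lintegral_congr fun s => step3 s

/-- For continuous D and L(t;x) = x ∨ sup_{[0,t]} D with x₁ ≤ x₂:
(i) 0 ≤ L(t;x₂) - L(t;x₁) ≤ x₂ - x₁; (ii) t ↦ L(t;x₂) - L(t;x₁) is nonincreasing;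
(iii) 0 ≤ ∫₀^∞ e^{-ρt}dL(t;x₁) - ∫₀^∞ e^{-ρt}dL(t;x₂) ≤ x₂ - x₁. -/
theorem regulator_lipschitz_in_initial_level
    (ρ x₁ x₂ : ℝ) (hρ : 0 < ρ) (hx1 : 0 ≤ x₁) (hx : x₁ ≤ x₂)
    (D : ℝ → ℝ) (hD : Continuous D) (hD0 : D 0 ≤ x₁)
    (L : ℝ → ℝ → ℝ)
    (hL : ∀ x t : ℝ, L x t = max x (⨆ s : Set.Icc (0 : ℝ) t, D (s : ℝ)))
    (L1 L2 : StieltjesFunction ℝ)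
    (hL1 : ∀ t ≥ (0 : ℝ), L1 t = L x₁ t) (hL2 : ∀ t ≥ (0 : ℝ), L2 t = L x₂ t)
    (hI1 : IntegrableOn (fun t => Real.exp (-ρ * t)) (Set.Ioi 0) L1.measure)
    (hI2 : IntegrableOn (fun t => Real.exp (-ρ * t)) (Set.Ioi 0) L2.measure) :
    (∀ t ≥ (0 : ℝ), 0 ≤ L x₂ t - L x₁ t ∧ L x₂ t - L x₁ t ≤ x₂ - x₁) ∧
    AntitoneOn (fun t => L x₂ t - L x₁ t) (Set.Ici (0 : ℝ)) ∧
    (0 ≤ (∫ t in Set.Ioi (0 : ℝ), Real.exp (-ρ * t) ∂L1.measure)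
        - (∫ t in Set.Ioi (0 : ℝ), Real.exp (-ρ * t) ∂L2.measure) ∧
      (∫ t in Set.Ioi (0 : ℝ), Real.exp (-ρ * t) ∂L1.measure)
        - (∫ t in Set.Ioi (0 : ℝ), Real.exp (-ρ * t) ∂L2.measure) ≤ x₂ - x₁) := by
  -- the running supremum
  have hsup : ∀ t : ℝ, (⨆ s : Set.Icc (0 : ℝ) t, D (s : ℝ)) = sSup (D '' Set.Icc 0 t) :=
    fun t => (sSup_image').symm
  set S : ℝ → ℝ := fun t => sSup (D '' Set.Icc 0 t) with hSdef
  have hLS : ∀ x t : ℝ, L x t = max x (S t) := fun x t => by rw [hL, hsup]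
  have hSmono : ∀ t₁ t₂ : ℝ, 0 ≤ t₁ → t₁ ≤ t₂ → S t₁ ≤ S t₂ := by
    intro t₁ t₂ h0 h12
    apply csSup_le_csSup
    · exact (isCompact_Icc.image_of_continuousOn hD.continuousOn).bddAbove
    · exact (Set.nonempty_Icc.2 h0).image D
    · exact Set.image_mono (Set.Icc_subset_Icc le_rfl h12)
  have hS0 : S 0 = D 0 := by
    rw [hSdef]; simp [Set.Icc_self]
  -- part (i)
  have part1 : ∀ t ≥ (0 : ℝ), 0 ≤ L x₂ t - L x₁ t ∧ L x₂ t - L x₁ t ≤ x₂ - x₁ := by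
    intro t _
    rw [hLS, hLS]
    exact ⟨sub_nonneg.2 (max_le_max hx le_rfl), md2 hx⟩
  refine ⟨part1, ?_, ?_⟩
  · -- part (ii)
    intro t₁ ht₁ t₂ _ h12
    simp only [hLS]
    exact md3 hx (hSmono t₁ t₂ ht₁ h12)
  · -- part (iii)
    have hL10 : L1 0 = x₁ := by
      rw [hL1 0 le_rfl, hLS, hS0]; exact max_eq_left hD0
    have hL20 : L2 0 = x₂ := by
      rw [hL2 0 le_rfl, hLS, hS0]; exact max_eq_left (hD0.trans hx)
    set I1 := ∫ t in Set.Ioi (0 : ℝ), Real.exp (-ρ * t) ∂L1.measure with hI1def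
    set I2 := ∫ t in Set.Ioi (0 : ℝ), Real.exp (-ρ * t) ∂L2.measure with hI2def
    set A := ∫⁻ s in Set.Ioi (0 : ℝ),
        ENNReal.ofReal (ρ * Real.exp (-ρ * s)) * ENNReal.ofReal (L1 s - L1 0) with hAdef
    set B := ∫⁻ s in Set.Ioi (0 : ℝ),
        ENNReal.ofReal (ρ * Real.exp (-ρ * s)) * ENNReal.ofReal (L2 s - L2 0) with hBdef
    have hexp_nonneg : ∀ᵐ t ∂(L1.measure.restrict (Set.Ioi (0:ℝ))),
        0 ≤ Real.exp (-ρ * t) := Filter.Eventually.of_forall fun t => (Real.exp_pos _).le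
    have hexp_nonneg2 : ∀ᵐ t ∂(L2.measure.restrict (Set.Ioi (0:ℝ))),
        0 ≤ Real.exp (-ρ * t) := Filter.Eventually.of_forall fun t => (Real.exp_pos _).le
    have hA : ENNReal.ofReal I1 = A := by
      rw [hI1def, ofReal_integral_eq_lintegral_ofReal hI1 hexp_nonneg, key_fubini ρ hρ L1]
    have hB : ENNReal.ofReal I2 = B := by
      rw [hI2def, ofReal_integral_eq_lintegral_ofReal hI2 hexp_nonneg2, key_fubini ρ hρ L2]
    have hAtop : A ≠ ⊤ := by rw [← hA]; exact ENNReal.ofReal_ne_top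
    have hBtop : B ≠ ⊤ := by rw [← hB]; exact ENNReal.ofReal_ne_top
    have hI1nonneg : 0 ≤ I1 := integral_nonneg fun t => (Real.exp_pos _).le
    have hI2nonneg : 0 ≤ I2 := integral_nonneg fun t => (Real.exp_pos _).le
    have hI1A : I1 = A.toReal := by rw [← hA, ENNReal.toReal_ofReal hI1nonneg]
    have hI2B : I2 = B.toReal := by rw [← hB, ENNReal.toReal_ofReal hI2nonneg]
    -- pointwise comparisons on Ioi 0
    have hpt : ∀ s ∈ Set.Ioi (0 : ℝ),
        L2 s - L2 0 ≤ L1 s - L1 0 ∧ L1 s - L1 0 ≤ (L2 s - L2 0) + (x₂ - x₁) := by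
      intro s hs
      have hs0 : (0 : ℝ) ≤ s := (le_of_lt hs)
      obtain ⟨hlo, hhi⟩ := part1 s hs0
      rw [hL1 s hs0, hL2 s hs0, hL10, hL20]
      constructor <;> linarith
    have hBA : B ≤ A := by
      refine lintegral_mono_ae ?_
      filter_upwards [ae_restrict_mem measurableSet_Ioi] with s hs
      exact mul_le_mul_right (ENNReal.ofReal_le_ofReal (hpt s hs).1) _
    -- total mass of the exponential density
    have hmass : (∫⁻ s in Set.Ioi (0 : ℝ), ENNReal.ofReal (ρ * Real.exp (-ρ * s))) = 1 := by
      rw [← ofReal_integral_eq_lintegral_ofReal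
        ((exp_neg_integrableOn_Ioi 0 hρ).const_mul ρ)
        (Filter.Eventually.of_forall fun s => mul_nonneg hρ.le (Real.exp_pos _).le),
        exp_int ρ 0 hρ]
      simp
    have hAB : A ≤ B + ENNReal.ofReal (x₂ - x₁) := by
      have step : A ≤ ∫⁻ s in Set.Ioi (0 : ℝ),
          (ENNReal.ofReal (ρ * Real.exp (-ρ * s)) * ENNReal.ofReal (L2 s - L2 0)
            + ENNReal.ofReal (ρ * Real.exp (-ρ * s)) * ENNReal.ofReal (x₂ - x₁)) := by
        refine lintegral_mono_ae ?_
        filter_upwards [ae_restrict_mem measurableSet_Ioi] with s hs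
        have h1 : ENNReal.ofReal (L1 s - L1 0)
            ≤ ENNReal.ofReal (L2 s - L2 0) + ENNReal.ofReal (x₂ - x₁) := by
          rw [← ENNReal.ofReal_add]
          · exact ENNReal.ofReal_le_ofReal (hpt s hs).2
          · have : L2 0 ≤ L2 s := L2.mono (le_of_lt hs)
            linarith
          · linarith
        calc ENNReal.ofReal (ρ * Real.exp (-ρ * s)) * ENNReal.ofReal (L1 s - L1 0)
            ≤ ENNReal.ofReal (ρ * Real.exp (-ρ * s))
              * (ENNReal.ofReal (L2 s - L2 0) + ENNReal.ofReal (x₂ - x₁)) :=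
              mul_le_mul_right h1 _
          _ = _ := by rw [mul_add]
      have hmeas2 : Measurable fun s : ℝ =>
          ENNReal.ofReal (ρ * Real.exp (-ρ * s)) * ENNReal.ofReal (x₂ - x₁) :=
        (((measurable_id.const_mul (-ρ)).exp.const_mul ρ).ennreal_ofReal).mul_const _
      rw [lintegral_add_right _ hmeas2] at step
      refine step.trans ?_
      have hconst : (∫⁻ a in Set.Ioi (0 : ℝ),
          ENNReal.ofReal (ρ * Real.exp (-ρ * a)) * ENNReal.ofReal (x₂ - x₁))
            = ENNReal.ofReal (x₂ - x₁) := by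
        rw [lintegral_mul_const' _ _ ENNReal.ofReal_ne_top, hmass, one_mul]
      rw [hconst, ← hBdef]
    constructor
    · rw [hI1A, hI2B]
      exact sub_nonneg.2 (ENNReal.toReal_mono hAtop hBA)
    · rw [hI1A, hI2B]
      have h2 : A.toReal ≤ (B + ENNReal.ofReal (x₂ - x₁)).toReal :=
        ENNReal.toReal_mono (by
          exact ENNReal.add_ne_top.2 ⟨hBtop, ENNReal.ofReal_ne_top⟩) hAB
      rw [ENNReal.toReal_add hBtop ENNReal.ofReal_ne_top,
        ENNReal.toReal_ofReal (by linarith)] at h2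
      linarith
end
end
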